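/- arXiv:2012.03143 — 2 statements merged into one kernel-verified Lean document; each statement's English description precedes it below -/
import Mathlib

section
/- Let G be a simple graph on n nodes in which at least n/2 nodes have degree at least d₁* := (6/(αε²))·ln(12/(αεμ)), where α,ε ∈ (0,1/2) are constants. Then for all sufficiently large n and all μ ∈ [1/√n, 1), with probability at least 1 − μ an (α,ε)-weak attacker does not win in t rounds for any t ∈ ℕ; indeed, with probability at least 1 − μ more than n/2 nodes are colored white by the end of round one, so white remains a strict majority of colored nodes forever. -/
open Finset
open scoped Classical

/-- The distance (in `ℕ∞`) from a node `v` to a set `R` of nodes. -/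
noncomputable def distSet {V : Type*} (G : SimpleGraph V) (R : Set V) (v : V) : ℕ∞ :=
  ⨅ u ∈ R, G.edist u v

/-- One update step: a node `v` that gets colored in round `t+1` adopts the most frequent
color among its already colored neighbors (which are exactly its neighbors at distance `t`
from the seed set `R`), breaking a tie using its tie-breaking bit `tie v`
(`true` codes white, `false` codes black). -/
noncomputable def stepColor {V : Type*} [Fintype V] (G : SimpleGraph V) (R : Set V)
    (tie : V → Bool) (t : ℕ) (prev : V → Bool) (v : V) : Bool :=
  let P := Finset.univ.filter fun u => G.Adj v u ∧ distSet G R u = (t : ℕ∞)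
  let w := (P.filter fun u => prev u = true).card
  let b := (P.filter fun u => prev u = false).card
  if b < w then true else if w < b then false else tie v

/-- `colAt G R c0 tie t v` is the color adopted by `v` if it gets colored in round `t`,
where `c0` is the initial coloring of the seed set `R` and `tie` gives the tie-breaking
bits (`true` = white, `false` = black). -/
noncomputable def colAt {V : Type*} [Fintype V] (G : SimpleGraph V) (R : Set V)
    (c0 tie : V → Bool) : ℕ → V → Bool
  | 0 => c0
  | t + 1 => stepColor G R tie t (colAt G R c0 tie t)

/-- The color that node `v` receives in the diffusion process (it is colored in round
`d(v, R)`). -/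
noncomputable def theColor {V : Type*} [Fintype V] (G : SimpleGraph V) (R : Set V)
    (c0 tie : V → Bool) (v : V) : Bool :=
  colAt G R c0 tie (distSet G R v).toNat v

/-- `whiteCount G R c0 tie t` = number of white nodes among all nodes colored during
rounds `0, …, t` (i.e. the quantity `ŵ_t`). -/
noncomputable def whiteCount {V : Type*} [Fintype V] (G : SimpleGraph V) (R : Set V)
    (c0 tie : V → Bool) (t : ℕ) : ℕ :=
  (Finset.univ.filter fun v =>
    distSet G R v ≤ (t : ℕ∞) ∧ theColor G R c0 tie v = true).card

/-- `blackCount G R c0 tie t` = number of black nodes among all nodes colored during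
rounds `0, …, t` (i.e. the quantity `b̂_t`). -/
noncomputable def blackCount {V : Type*} [Fintype V] (G : SimpleGraph V) (R : Set V)
    (c0 tie : V → Bool) (t : ℕ) : ℕ :=
  (Finset.univ.filter fun v =>
    distSet G R v ≤ (t : ℕ∞) ∧ theColor G R c0 tie v = false).card
/-- The probability weight of a weak-attacker configuration `cfg : V → Option Bool`:
each node is, independently, a non-seed (`none`) with probability `1 - a`, a white seed
(`some true`) with probability `(1/2+ε)·a`, and a black seed (`some false`) with
probability `(1/2-ε)·a`. -/
noncomputable def weakWeight {V : Type*} [Fintype V] (a ε : ℝ) (cfg : V → Option Bool) : ℝ :=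
  ∏ v, (match cfg v with
    | none => 1 - a
    | some true => (1/2 + ε) * a
    | some false => (1/2 - ε) * a)

/-- The probability of an event `E` depending only on the random seeds and their colors,
for an `(a,ε)`-weak attacker. -/
noncomputable def weakPr₀ (V : Type*) [Fintype V] [DecidableEq V] (a ε : ℝ)
    (E : (V → Option Bool) → Prop) : ℝ :=
  ∑ cfg : V → Option Bool, if E cfg then weakWeight a ε cfg else 0

/-- The probability of an event `E cfg tie` for an `(a,ε)`-weak attacker, where `cfg` is
the random seed configuration and `tie` an independent uniformly random assignment of
tie-breaking bits. -/
noncomputable def weakPr (V : Type*) [Fintype V] [DecidableEq V] (a ε : ℝ)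
    (E : (V → Option Bool) → (V → Bool) → Prop) : ℝ :=
  ∑ cfg : V → Option Bool, ∑ tie : V → Bool,
    if E cfg tie then weakWeight a ε cfg * (1/2 : ℝ) ^ (Fintype.card V) else 0

/-- The (random) seed set `R₀` determined by a weak-attacker configuration. -/
def seedsOf {V : Type*} (cfg : V → Option Bool) : Set V := {v | (cfg v).isSome}

/-- The initial coloring determined by a weak-attacker configuration
(`true` = white, `false` = black; the value on non-seeds is irrelevant junk). -/
def colOf {V : Type*} (cfg : V → Option Bool) (v : V) : Bool := (cfg v).getD false

/-! ### Probability framework on the finite configuration space -/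

set_option linter.unusedSectionVars false

section Framework

variable {V : Type} [Fintype V] [DecidableEq V] (a e : ℝ)

/-- per-coordinate weight -/
noncomputable def coordW : Option Bool → ℝ
  | none => 1 - a
  | some true => (1/2 + e) * a
  | some false => (1/2 - e) * a

lemma weakWeight_eq (cfg : V → Option Bool) :
    weakWeight a e cfg = ∏ v, coordW a e (cfg v) := by
  unfold weakWeight
  refine Finset.prod_congr rfl fun v _ => ?_
  rcases h : cfg v with _ | b
  · rfl
  · cases b <;> rfl

/-- expectation of a real random variable of the configuration -/
noncomputable def Exp (F : (V → Option Bool) → ℝ) : ℝ :=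
  ∑ cfg : V → Option Bool, F cfg * weakWeight a e cfg

/-- per-coordinate expectation -/
noncomputable def Mex (g : Option Bool → ℝ) : ℝ :=
  (1 - a) * g none + (1/2 + e) * a * g (some true) + (1/2 - e) * a * g (some false)

lemma sum_coordW_mul (g : Option Bool → ℝ) :
    ∑ b : Option Bool, g b * coordW a e b = Mex a e g := by
  rw [Fintype.sum_option, Fintype.sum_bool]
  show g none * (1-a) + (g (some true) * ((1/2+e)*a) + g (some false) * ((1/2-e)*a)) = _
  unfold Mex; ring

lemma Exp_prod (h : V → Option Bool → ℝ) :
    Exp a e (fun cfg => ∏ v, h v (cfg v)) = ∏ v, Mex a e (h v) := by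
  have hme : ∀ v : V, Mex a e (h v) = ∑ b : Option Bool, h v b * coordW a e b :=
    fun v => (sum_coordW_mul a e (h v)).symm
  simp_rw [hme]
  rw [Fintype.prod_sum]
  unfold Exp
  refine Finset.sum_congr rfl fun cfg _ => ?_
  rw [weakWeight_eq, ← Finset.prod_mul_distrib]

lemma Mex_one : Mex a e (fun _ => 1) = 1 := by unfold Mex; ring

lemma Exp_congr {F G : (V → Option Bool) → ℝ} (h : ∀ cfg, F cfg = G cfg) :
    Exp a e F = Exp a e G := by
  unfold Exp; exact Finset.sum_congr rfl fun cfg _ => by rw [h]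

lemma Mex_nonneg (hc : ∀ b, 0 ≤ coordW a e b) {g : Option Bool → ℝ}
    (hg : ∀ b, 0 ≤ g b) : 0 ≤ Mex a e g := by
  rw [← sum_coordW_mul]
  exact Finset.sum_nonneg fun b _ => mul_nonneg (hg b) (hc b)

lemma Mex_mono (hc : ∀ b, 0 ≤ coordW a e b) {g₁ g₂ : Option Bool → ℝ}
    (hg : ∀ b, g₁ b ≤ g₂ b) : Mex a e g₁ ≤ Mex a e g₂ := by
  rw [← sum_coordW_mul, ← sum_coordW_mul]
  exact Finset.sum_le_sum fun b _ => mul_le_mul_of_nonneg_right (hg b) (hc b)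

lemma weakWeight_nonneg (hc : ∀ b, 0 ≤ coordW a e b) (cfg : V → Option Bool) :
    0 ≤ weakWeight a e cfg := by
  rw [weakWeight_eq]
  exact Finset.prod_nonneg fun v _ => hc _

lemma Exp_mono (hc : ∀ b, 0 ≤ coordW a e b) {F G : (V → Option Bool) → ℝ}
    (h : ∀ cfg, F cfg ≤ G cfg) : Exp a e F ≤ Exp a e G :=
  Finset.sum_le_sum fun cfg _ =>
    mul_le_mul_of_nonneg_right (h cfg) (weakWeight_nonneg a e hc cfg)

lemma Exp_one : Exp a e (fun _ : V → Option Bool => 1) = 1 := by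
  have h := Exp_prod a e (fun (_ : V) (_ : Option Bool) => (1:ℝ))
  simp only [Finset.prod_const_one] at h
  rw [h, Mex_one]
  simp

lemma Exp_prod_subset (s : Finset V) (h : V → Option Bool → ℝ) :
    Exp a e (fun cfg => ∏ v ∈ s, h v (cfg v)) = ∏ v ∈ s, Mex a e (h v) := by
  have key := Exp_prod a e (fun v b => if v ∈ s then h v b else 1)
  have h1 : ∀ cfg : V → Option Bool,
      (∏ v, if v ∈ s then h v (cfg v) else 1) = ∏ v ∈ s, h v (cfg v) := by
    intro cfg
    rw [← Finset.prod_filter]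
    congr 1
    simp
  have h2 : (∏ v, Mex a e (fun b => if v ∈ s then h v b else 1)) = ∏ v ∈ s, Mex a e (h v) := by
    rw [← Finset.prod_filter_mul_prod_filter_not Finset.univ (fun v => v ∈ s)]
    have e1 : ∀ v ∈ Finset.univ.filter (fun v => v ∈ s),
        Mex a e (fun b => if v ∈ s then h v b else 1) = Mex a e (h v) := by
      intro v hv; simp only [Finset.mem_filter] at hv
      simp [hv.2]
    have e2 : ∀ v ∈ Finset.univ.filter (fun v => ¬ v ∈ s),
        Mex a e (fun b => if v ∈ s then h v b else 1) = 1 := by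
      intro v hv; simp only [Finset.mem_filter] at hv
      simp [hv.2, Mex_one]
    rw [Finset.prod_congr rfl e1, Finset.prod_congr rfl e2, Finset.prod_const_one, mul_one]
    congr 1
    ext v; simp
  rw [← h2, ← key]
  exact Exp_congr a e fun cfg => (h1 cfg).symm

lemma Exp_single (v : V) (h : Option Bool → ℝ) :
    Exp a e (fun cfg => h (cfg v)) = Mex a e h := by
  have h' := Exp_prod_subset a e {v} (fun _ => h)
  simp only [Finset.prod_singleton] at h'
  exact h'

lemma Exp_pair {v w : V} (hvw : v ≠ w) (h₁ h₂ : Option Bool → ℝ) :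
    Exp a e (fun cfg => h₁ (cfg v) * h₂ (cfg w)) = Mex a e h₁ * Mex a e h₂ := by
  have h' := Exp_prod_subset a e {v, w} (fun u => if u = v then h₁ else h₂)
  rw [Finset.prod_pair hvw] at h'
  simp only [eq_self_iff_true, if_true, if_neg (Ne.symm hvw)] at h'
  rw [← h']
  refine Exp_congr a e fun cfg => ?_
  rw [Finset.prod_pair hvw]
  simp [Ne.symm hvw]

lemma Exp_sum {ι : Type*} (t : Finset ι) (F : ι → (V → Option Bool) → ℝ) :
    Exp a e (fun cfg => ∑ i ∈ t, F i cfg) = ∑ i ∈ t, Exp a e (F i) := by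
  unfold Exp
  rw [Finset.sum_comm]
  exact Finset.sum_congr rfl fun cfg _ => by rw [Finset.sum_mul]

/-- probability as expectation of indicator -/
lemma weakPr₀_eq (E : (V → Option Bool) → Prop) :
    weakPr₀ V a e E = Exp a e (fun cfg => if E cfg then 1 else 0) := by
  unfold weakPr₀ Exp
  exact Finset.sum_congr rfl fun cfg _ => by
    by_cases h : E cfg <;> simp [h]

lemma weakPr₀_mono (hc : ∀ b, 0 ≤ coordW a e b) {E₁ E₂ : (V → Option Bool) → Prop}
    (h : ∀ cfg, E₁ cfg → E₂ cfg) :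
    weakPr₀ V a e E₁ ≤ weakPr₀ V a e E₂ := by
  rw [weakPr₀_eq, weakPr₀_eq]
  refine Exp_mono a e hc fun cfg => ?_
  by_cases h1 : E₁ cfg
  · simp [h1, h cfg h1]
  · by_cases h2 : E₂ cfg <;> simp [h1, h2]

/-- Markov's inequality -/
lemma markov (hc : ∀ b, 0 ≤ coordW a e b) (F : (V → Option Bool) → ℝ)
    (hF : ∀ cfg, 0 ≤ F cfg) {c : ℝ} (hcpos : 0 < c) :
    weakPr₀ V a e (fun cfg => c ≤ F cfg) ≤ Exp a e F / c := by
  rw [weakPr₀_eq]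
  have step : Exp a e (fun cfg => if c ≤ F cfg then (1:ℝ) else 0) ≤
      Exp a e (fun cfg => F cfg / c) := by
    refine Exp_mono a e hc fun cfg => ?_
    by_cases h : c ≤ F cfg
    · simp only [if_pos h]
      rw [le_div_iff₀ hcpos]; linarith
    · simp only [if_neg h]
      have := hF cfg
      positivity
  refine step.trans ?_
  unfold Exp
  rw [Finset.sum_div]
  exact le_of_eq (Finset.sum_congr rfl fun cfg _ => by ring)

lemma weakPr₀_union3 (hc : ∀ b, 0 ≤ coordW a e b) (E₁ E₂ E₃ : (V → Option Bool) → Prop) :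
    weakPr₀ V a e (fun cfg => E₁ cfg ∨ E₂ cfg ∨ E₃ cfg) ≤
      weakPr₀ V a e E₁ + weakPr₀ V a e E₂ + weakPr₀ V a e E₃ := by
  unfold weakPr₀
  rw [← Finset.sum_add_distrib, ← Finset.sum_add_distrib]
  refine Finset.sum_le_sum fun cfg _ => ?_
  have hw := weakWeight_nonneg a e hc cfg
  by_cases h1 : E₁ cfg <;> by_cases h2 : E₂ cfg <;> by_cases h3 : E₃ cfg <;>
    simp [h1, h2, h3] <;> linarith

lemma weakPr₀_compl (E : (V → Option Bool) → Prop) :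
    weakPr₀ V a e (fun cfg => ¬ E cfg) = 1 - weakPr₀ V a e E := by
  have mass : weakPr₀ V a e (fun _ => True) = 1 := by
    rw [weakPr₀_eq]
    simp only [if_pos trivial]
    exact Exp_one a e
  rw [← mass]
  unfold weakPr₀
  rw [← Finset.sum_sub_distrib]
  refine Finset.sum_congr rfl fun cfg _ => ?_
  by_cases h : E cfg <;> simp [h]

lemma Exp_ite_eq_pr (P : (V → Option Bool) → Prop) [inst : ∀ cfg, Decidable (P cfg)] :
    Exp a e (fun cfg => if P cfg then (1:ℝ) else 0) = weakPr₀ V a e P := by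
  rw [weakPr₀_eq]
  refine Exp_congr a e fun cfg => ?_
  by_cases h : P cfg <;> simp [h]

/-- reduction from `weakPr` to `weakPr₀` -/
lemma weakPr₀_le_weakPr (hc : ∀ b, 0 ≤ coordW a e b) (E₀ : (V → Option Bool) → Prop)
    (E : (V → Option Bool) → (V → Bool) → Prop)
    (himp : ∀ cfg tie, E₀ cfg → E cfg tie) :
    weakPr₀ V a e E₀ ≤ weakPr V a e E := by
  unfold weakPr weakPr₀
  refine Finset.sum_le_sum fun cfg _ => ?_
  have hw := weakWeight_nonneg a e hc cfg
  by_cases h0 : E₀ cfg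
  · have hall : ∀ tie : V → Bool,
        (if E cfg tie then weakWeight a e cfg * (1/2:ℝ) ^ (Fintype.card V) else 0)
          = weakWeight a e cfg * (1/2:ℝ) ^ (Fintype.card V) :=
      fun tie => if_pos (himp cfg tie h0)
    rw [Finset.sum_congr rfl (fun tie _ => hall tie), Finset.sum_const, Finset.card_univ,
      Fintype.card_fun, Fintype.card_bool, nsmul_eq_mul, if_pos h0]
    have h2 : ((2:ℝ) ^ Fintype.card V) * ((1/2:ℝ) ^ Fintype.card V) = 1 := by
      rw [← mul_pow]; norm_num
    push_cast
    have h3 : (2:ℝ) ^ Fintype.card V * (weakWeight a e cfg * (1/2:ℝ) ^ Fintype.card V)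
        = weakWeight a e cfg := by
      rw [mul_comm (weakWeight a e cfg), ← mul_assoc, h2, one_mul]
    exact le_of_eq h3.symm
  · simp only [if_neg h0]
    refine Finset.sum_nonneg fun tie _ => ?_
    by_cases h : E cfg tie
    · simp only [if_pos h]; positivity
    · simp [h]

end Framework
/-! ### Analytic lemmas -/

lemma exp_est {e : ℝ} (he0 : 0 < e) (he : e < 1/2) :
    (1/2 + e) * Real.exp (-e) + (1/2 - e) * Real.exp e ≤ 1 - e^2 := by
  have habs : |e| ≤ 1 := by rw [abs_of_pos he0]; linarith
  have habs' : |(-e)| ≤ 1 := by rw [abs_neg]; exact habs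
  have h1 := Real.exp_bound habs (n := 2) (by norm_num)
  have h2 := Real.exp_bound habs' (n := 2) (by norm_num)
  rw [show ∑ m ∈ Finset.range 2, e ^ m / m.factorial = 1 + e by
    norm_num [Finset.sum_range_succ]] at h1
  rw [show ∑ m ∈ Finset.range 2, (-e) ^ m / m.factorial = 1 - e by
    rw [Finset.sum_range_succ, Finset.sum_range_succ, Finset.sum_range_zero]
    norm_num
    all_goals linarith] at h2
  rw [abs_of_pos he0] at h1
  rw [abs_neg, abs_of_pos he0] at h2
  norm_num [Nat.factorial] at h1 h2
  have hb1 : Real.exp e ≤ 1 + e + e^2 * (3/4) := by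
    have := (abs_le.mp h1).2; nlinarith
  have hb2 : Real.exp (-e) ≤ 1 - e + e^2 * (3/4) := by
    have := (abs_le.mp h2).2; nlinarith
  have hp1 : (0:ℝ) ≤ 1/2 + e := by linarith
  have hp2 : (0:ℝ) ≤ 1/2 - e := by linarith
  nlinarith [mul_le_mul_of_nonneg_left hb2 hp1, mul_le_mul_of_nonneg_left hb1 hp2,
    sq_nonneg e]

/-- weight function for a neighbor in the per-node Chernoff bound -/
noncomputable def chiC : Option Bool → ℝ
  | none => 0
  | some true => -1
  | some false => 1

noncomputable def gChern (e : ℝ) (b : Option Bool) : ℝ := Real.exp (e * chiC b)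

lemma Mex_gChern {a e : ℝ} (ha0 : 0 < a) (ha : a < 1/2) (he0 : 0 < e) (he : e < 1/2) :
    Mex a e (gChern e) ≤ 1 - a * e^2 := by
  have hest := exp_est he0 he
  unfold Mex gChern chiC
  simp only [mul_zero, Real.exp_zero, mul_neg, mul_one]
  nlinarith [hest]

lemma gChern_nonneg (e : ℝ) (b : Option Bool) : 0 ≤ gChern e b := le_of_lt (Real.exp_pos _)

lemma one_sub_pow_le_exp {x : ℝ} (hx0 : 0 ≤ x) (hx1 : x ≤ 1) (d : ℕ) :
    (1 - x) ^ d ≤ Real.exp (-(x * d)) := by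
  have h1 : 1 - x ≤ Real.exp (-x) := by
    have := Real.add_one_le_exp (-x); linarith
  calc (1 - x) ^ d ≤ (Real.exp (-x)) ^ d := by
        apply pow_le_pow_left₀ (by linarith) h1
    _ = Real.exp (-(x * d)) := by
        rw [← Real.exp_nat_mul]; ring_nf

/-! ### Chebyshev inequality -/

section Cheb

variable {V : Type} [Fintype V] [DecidableEq V] (a e : ℝ)

lemma Exp_sq_sum (hc : ∀ b, 0 ≤ coordW a e b) (s : Finset V) (g : Option Bool → ℝ)
    (hm : Mex a e g = 0) (hb : ∀ b, g b ^ 2 ≤ 1) :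
    Exp a e (fun cfg => (∑ v ∈ s, g (cfg v)) ^ 2) ≤ s.card := by
  have expand : ∀ cfg : V → Option Bool,
      (∑ v ∈ s, g (cfg v)) ^ 2 = ∑ v ∈ s, ∑ w ∈ s, g (cfg v) * g (cfg w) := by
    intro cfg; rw [sq, Finset.sum_mul_sum]
  rw [Exp_congr a e expand, Exp_sum]
  have inner : ∀ v ∈ s, Exp a e (fun cfg => ∑ w ∈ s, g (cfg v) * g (cfg w)) ≤ 1 := by
    intro v hv
    rw [Exp_sum, ← Finset.add_sum_erase _ _ hv]
    have hz : ∀ w ∈ s.erase v, Exp a e (fun cfg => g (cfg v) * g (cfg w)) = 0 := by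
      intro w hw
      rw [Exp_pair a e (Finset.ne_of_mem_erase hw).symm g g, hm, mul_zero]
    rw [Finset.sum_congr rfl hz, Finset.sum_const_zero, add_zero]
    have hsq : Exp a e (fun cfg => g (cfg v) * g (cfg v)) = Mex a e (fun b => g b * g b) :=
      Exp_single a e v (fun b => g b * g b)
    rw [hsq]
    calc Mex a e (fun b => g b * g b) ≤ Mex a e (fun _ => 1) :=
          Mex_mono a e hc fun b => by have := hb b; nlinarith [sq_nonneg (g b)]
      _ = 1 := Mex_one a e
  calc ∑ v ∈ s, Exp a e (fun cfg => ∑ w ∈ s, g (cfg v) * g (cfg w))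
      ≤ ∑ _v ∈ s, (1:ℝ) := Finset.sum_le_sum inner
    _ = s.card := by simp

lemma cheb (hc : ∀ b, 0 ≤ coordW a e b) (s : Finset V) (g : Option Bool → ℝ)
    (hm : Mex a e g = 0) (hb : ∀ b, g b ^ 2 ≤ 1) {c : ℝ} (hcpos : 0 < c) :
    weakPr₀ V a e (fun cfg => c ≤ ∑ v ∈ s, g (cfg v)) ≤ s.card / c ^ 2 := by
  have h1 : weakPr₀ V a e (fun cfg => c ≤ ∑ v ∈ s, g (cfg v)) ≤
      weakPr₀ V a e (fun cfg => c ^ 2 ≤ (∑ v ∈ s, g (cfg v)) ^ 2) := by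
    refine weakPr₀_mono a e hc fun cfg h => ?_
    nlinarith
  have h2 := markov a e hc (fun cfg => (∑ v ∈ s, g (cfg v)) ^ 2)
    (fun cfg => sq_nonneg _) (pow_pos hcpos 2)
  have h3 := Exp_sq_sum a e hc s g hm hb
  calc weakPr₀ V a e (fun cfg => c ≤ ∑ v ∈ s, g (cfg v)) ≤ _ := h1
    _ ≤ Exp a e (fun cfg => (∑ v ∈ s, g (cfg v)) ^ 2) / c ^ 2 := h2
    _ ≤ s.card / c ^ 2 := by gcongr

end Cheb

/-! ### centered indicator variables -/

noncomputable def gB (p : ℝ) : Option Bool → ℝ := fun b => (if b = some false then 1 else 0) - p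
noncomputable def gW (p : ℝ) : Option Bool → ℝ := fun b => p - (if b = some true then 1 else 0)

lemma Mex_gB (a e : ℝ) : Mex a e (gB ((1/2 - e)*a)) = 0 := by unfold Mex gB; simp; ring
lemma Mex_gW (a e : ℝ) : Mex a e (gW ((1/2 + e)*a)) = 0 := by unfold Mex gW; simp; ring

lemma gB_sq_le {p : ℝ} (h0 : 0 ≤ p) (h1 : p ≤ 1) : ∀ b, gB p b ^ 2 ≤ 1 := by
  intro b; unfold gB; rcases b with _ | b
  · simp [abs_le]; constructor <;> linarith
  · cases b <;> simp [abs_le] <;> constructor <;> linarith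

lemma gW_sq_le {p : ℝ} (h0 : 0 ≤ p) (h1 : p ≤ 1) : ∀ b, gW p b ^ 2 ≤ 1 := by
  intro b; unfold gW; rcases b with _ | b
  · simp [abs_le]; constructor <;> linarith
  · cases b <;> simp [abs_le] <;> constructor <;> linarith

section SumG

variable {V : Type} [Fintype V] [DecidableEq V]

lemma sum_gB (s : Finset V) (p : ℝ) (cfg : V → Option Bool) :
    ∑ v ∈ s, gB p (cfg v) = ((s.filter fun v => cfg v = some false).card : ℝ) - s.card * p := by
  unfold gB
  rw [Finset.sum_sub_distrib, Finset.sum_boole, Finset.sum_const, nsmul_eq_mul]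

lemma sum_gW (s : Finset V) (p : ℝ) (cfg : V → Option Bool) :
    ∑ v ∈ s, gW p (cfg v) = s.card * p - ((s.filter fun v => cfg v = some true).card : ℝ) := by
  unfold gW
  rw [Finset.sum_sub_distrib, Finset.sum_boole, Finset.sum_const, nsmul_eq_mul]

end SumG
/-! ### Graph-specific definitions and the per-node bound -/

section Graph

variable {V : Type} [Fintype V] [DecidableEq V] (G : SimpleGraph V)

/-- number of white-seed neighbors of `v` -/
noncomputable def Wv (cfg : V → Option Bool) (v : V) : ℕ :=
  ((G.neighborFinset v).filter fun u => cfg u = some true).card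

/-- number of black-seed neighbors of `v` -/
noncomputable def Bv (cfg : V → Option Bool) (v : V) : ℕ :=
  ((G.neighborFinset v).filter fun u => cfg u = some false).card

lemma sum_chiC (cfg : V → Option Bool) (v : V) :
    ∑ u ∈ G.neighborFinset v, chiC (cfg u) = (Bv G cfg v : ℝ) - (Wv G cfg v : ℝ) := by
  have hpt : ∀ u, chiC (cfg u) =
      (if cfg u = some false then (1:ℝ) else 0) - (if cfg u = some true then (1:ℝ) else 0) := by
    intro u
    rcases h : cfg u with _ | b
    · simp [chiC]
    · cases b <;> simp [chiC]
  rw [Finset.sum_congr rfl fun u _ => hpt u, Finset.sum_sub_distrib]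
  unfold Bv Wv
  rw [Finset.sum_boole, Finset.sum_boole]

lemma prod_gChern (e : ℝ) (cfg : V → Option Bool) (v : V) :
    ∏ u ∈ G.neighborFinset v, gChern e (cfg u) =
      Real.exp (e * ((Bv G cfg v : ℝ) - (Wv G cfg v : ℝ))) := by
  unfold gChern
  rw [← Real.exp_sum, ← Finset.mul_sum, sum_chiC]

/-- Chernoff bound: a fixed non-seed node sees at least as many black as white seed
neighbors with probability at most `(1 - a e²)^deg`. -/
lemma pr_bad_node (a e : ℝ) (ha0 : 0 < a) (ha : a < 1/2) (he0 : 0 < e) (he : e < 1/2)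
    (hc : ∀ b, 0 ≤ coordW a e b) (v : V) :
    weakPr₀ V a e (fun cfg => cfg v = none ∧ Wv G cfg v ≤ Bv G cfg v) ≤
      (1 - a * e^2) ^ (G.degree v) := by
  have hvN : v ∉ G.neighborFinset v := by
    simp [SimpleGraph.mem_neighborFinset, G.irrefl]
  set dnone : Option Bool → ℝ := fun b => if b = none then 1 else 0 with hdnone
  have hbound : weakPr₀ V a e (fun cfg => cfg v = none ∧ Wv G cfg v ≤ Bv G cfg v) ≤
      Exp a e (fun cfg => dnone (cfg v) * ∏ u ∈ G.neighborFinset v, gChern e (cfg u)) := by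
    rw [weakPr₀_eq]
    refine Exp_mono a e hc fun cfg => ?_
    by_cases hE : cfg v = none ∧ Wv G cfg v ≤ Bv G cfg v
    · rw [if_pos hE, prod_gChern, hdnone]
      simp only [if_pos hE.1]
      rw [one_mul]
      refine Real.one_le_exp ?_
      have : (Wv G cfg v : ℝ) ≤ (Bv G cfg v : ℝ) := Nat.cast_le.mpr hE.2
      nlinarith
    · rw [if_neg hE]
      refine mul_nonneg ?_ (Finset.prod_nonneg fun u _ => gChern_nonneg e _)
      rw [hdnone]
      by_cases h : cfg v = none <;> simp [h]
  refine hbound.trans ?_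
  have key : Exp a e (fun cfg => dnone (cfg v) * ∏ u ∈ G.neighborFinset v, gChern e (cfg u)) =
      Mex a e dnone * ∏ _u ∈ G.neighborFinset v, Mex a e (gChern e) := by
    have h' := Exp_prod_subset a e (insert v (G.neighborFinset v))
      (fun u => if u = v then dnone else gChern e)
    rw [Finset.prod_insert hvN] at h'
    simp only [eq_self_iff_true, if_true] at h'
    have hL : ∀ cfg : V → Option Bool,
        (∏ u ∈ insert v (G.neighborFinset v),
          (if u = v then dnone else gChern e) (cfg u)) =
        dnone (cfg v) * ∏ u ∈ G.neighborFinset v, gChern e (cfg u) := by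
      intro cfg
      rw [Finset.prod_insert hvN]
      simp only [eq_self_iff_true, if_true]
      congr 1
      refine Finset.prod_congr rfl fun u hu => ?_
      have : u ≠ v := fun h => hvN (h ▸ hu)
      simp [this]
    have hR : (∏ u ∈ G.neighborFinset v,
        Mex a e ((if u = v then dnone else gChern e))) =
        ∏ _u ∈ G.neighborFinset v, Mex a e (gChern e) := by
      refine Finset.prod_congr rfl fun u hu => ?_
      have : u ≠ v := fun h => hvN (h ▸ hu)
      simp [this]
    rw [← hR, ← h']
    exact Exp_congr a e fun cfg => (hL cfg).symm
  rw [key, Finset.prod_const, SimpleGraph.card_neighborFinset_eq_degree]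
  have hMd : Mex a e dnone = 1 - a := by rw [hdnone]; unfold Mex; simp
  have hMg := Mex_gChern ha0 ha he0 he
  have hMg0 : 0 ≤ Mex a e (gChern e) := Mex_nonneg a e hc fun b => gChern_nonneg e b
  have h1 : (Mex a e (gChern e)) ^ G.degree v ≤ (1 - a * e^2) ^ G.degree v :=
    pow_le_pow_left₀ hMg0 hMg _
  have h2 : (0:ℝ) ≤ (1 - a*e^2) ^ G.degree v := by
    apply pow_nonneg; nlinarith
  rw [hMd]
  nlinarith [pow_nonneg hMg0 (G.degree v)]

end Graph
/-! ### Deterministic lemmas about the diffusion process -/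

section Det

variable {V : Type} [Fintype V] [DecidableEq V] (G : SimpleGraph V)

lemma mem_seedsOf {cfg : V → Option Bool} {v : V} :
    v ∈ seedsOf cfg ↔ (cfg v).isSome := Iff.rfl

lemma distSet_eq_zero_iff {R : Set V} {v : V} : distSet G R v = 0 ↔ v ∈ R := by
  constructor
  · intro h
    by_contra hv
    have h1 : (1 : ℕ∞) ≤ distSet G R v := by
      refine le_iInf₂ fun u hu => ?_
      have hne : u ≠ v := fun he => hv (he ▸ hu)
      exact ENat.one_le_iff_ne_zero.mpr (SimpleGraph.edist_eq_zero_iff.ne.mpr hne)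
    rw [h] at h1
    exact absurd h1 (by simp)
  · intro hv
    refine le_antisymm ?_ zero_le
    have : distSet G R v ≤ G.edist v v := iInf₂_le v hv
    simpa using this

lemma distSet_eq_one {R : Set V} {v : V} (hv : v ∉ R) {u : V} (hu : u ∈ R)
    (huv : G.Adj u v) : distSet G R v = 1 := by
  refine le_antisymm ?_ ?_
  · have h1 : distSet G R v ≤ G.edist u v := iInf₂_le u hu
    rwa [(SimpleGraph.edist_eq_one_iff_adj).mpr huv] at h1
  · exact ENat.one_le_iff_ne_zero.mpr fun h => hv ((distSet_eq_zero_iff G).mp h)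

lemma stepColor_eq (R : Set V) (tie : V → Bool) (t : ℕ) (prev : V → Bool) (v : V) :
    stepColor G R tie t prev v =
      (if ((Finset.univ.filter fun u => G.Adj v u ∧ distSet G R u = (t : ℕ∞)).filter
            fun u => prev u = false).card <
          ((Finset.univ.filter fun u => G.Adj v u ∧ distSet G R u = (t : ℕ∞)).filter
            fun u => prev u = true).card
        then true
        else if ((Finset.univ.filter fun u => G.Adj v u ∧ distSet G R u = (t : ℕ∞)).filter
            fun u => prev u = true).card <
          ((Finset.univ.filter fun u => G.Adj v u ∧ distSet G R u = (t : ℕ∞)).filter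
            fun u => prev u = false).card
        then false else tie v) := rfl

lemma theColor_seed {cfg : V → Option Bool} {v : V} {b : Bool} (h : cfg v = some b)
    (tie : V → Bool) : theColor G (seedsOf cfg) (colOf cfg) tie v = b := by
  have h0 : distSet G (seedsOf cfg) v = 0 :=
    (distSet_eq_zero_iff G).mpr (by rw [mem_seedsOf, h]; rfl)
  unfold theColor
  rw [h0]
  show colOf cfg v = b
  unfold colOf
  rw [h]
  rfl

lemma white_filters (cfg : V → Option Bool) (v : V) :
    ((Finset.univ.filter fun u => G.Adj v u ∧ distSet G (seedsOf cfg) u = ((0:ℕ) : ℕ∞)).filter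
        fun u => colOf cfg u = true) =
      ((G.neighborFinset v).filter fun u => cfg u = some true) := by
  ext u
  simp only [Finset.mem_filter, Finset.mem_univ, true_and, SimpleGraph.mem_neighborFinset,
    Nat.cast_zero, distSet_eq_zero_iff, mem_seedsOf]
  rcases h : cfg u with _ | b
  · simp [colOf, h]
  · cases b <;> simp [colOf, h]

lemma black_filters (cfg : V → Option Bool) (v : V) :
    ((Finset.univ.filter fun u => G.Adj v u ∧ distSet G (seedsOf cfg) u = ((0:ℕ) : ℕ∞)).filter
        fun u => colOf cfg u = false) =
      ((G.neighborFinset v).filter fun u => cfg u = some false) := by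
  ext u
  simp only [Finset.mem_filter, Finset.mem_univ, true_and, SimpleGraph.mem_neighborFinset,
    Nat.cast_zero, distSet_eq_zero_iff, mem_seedsOf]
  rcases h : cfg u with _ | b
  · simp [colOf, h]
  · cases b <;> simp [colOf, h]

lemma theColor_dist_one_white {cfg : V → Option Bool} {v : V} (hnone : cfg v = none)
    (hwb : Bv G cfg v < Wv G cfg v) (tie : V → Bool) :
    distSet G (seedsOf cfg) v = 1 ∧ theColor G (seedsOf cfg) (colOf cfg) tie v = true := by
  have hvR : v ∉ seedsOf cfg := by rw [mem_seedsOf, hnone]; simp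
  obtain ⟨u, hu⟩ : ∃ u, u ∈ (G.neighborFinset v).filter fun u => cfg u = some true := by
    have : 0 < Wv G cfg v := lt_of_le_of_lt (Nat.zero_le _) hwb
    exact Finset.card_pos.mp this
  rw [Finset.mem_filter, SimpleGraph.mem_neighborFinset] at hu
  have huR : u ∈ seedsOf cfg := by rw [mem_seedsOf, hu.2]; rfl
  have hd1 : distSet G (seedsOf cfg) v = 1 := distSet_eq_one G hvR huR hu.1.symm
  refine ⟨hd1, ?_⟩
  unfold theColor
  rw [hd1]
  show colAt G (seedsOf cfg) (colOf cfg) tie 1 v = true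
  have hcol : colAt G (seedsOf cfg) (colOf cfg) tie 1 v =
      stepColor G (seedsOf cfg) tie 0 (colOf cfg) v := rfl
  rw [hcol, stepColor_eq, white_filters, black_filters]
  unfold Bv Wv at hwb
  rw [if_pos hwb]

/-- key deterministic lower bound on the number of white nodes after round one -/
lemma whiteCount_lower (H : Finset V) (cfg : V → Option Bool) (tie : V → Bool) :
    (H.filter fun v => cfg v = some true ∨ (cfg v = none ∧ Bv G cfg v < Wv G cfg v)).card +
      ((Finset.univ \ H).filter fun v => cfg v = some true).card ≤
    whiteCount G (seedsOf cfg) (colOf cfg) tie 1 := by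
  classical
  set W1 : Finset V := Finset.univ.filter fun v =>
    distSet G (seedsOf cfg) v ≤ ((1:ℕ) : ℕ∞) ∧
      theColor G (seedsOf cfg) (colOf cfg) tie v = true with hW1
  have hwhite : ∀ v, (cfg v = some true ∨ (cfg v = none ∧ Bv G cfg v < Wv G cfg v)) →
      v ∈ W1 := by
    intro v hv
    rw [hW1, Finset.mem_filter]
    refine ⟨Finset.mem_univ v, ?_⟩
    rcases hv with h | ⟨h1, h2⟩
    · constructor
      · rw [(distSet_eq_zero_iff G).mpr (by rw [mem_seedsOf, h]; rfl)]
        exact zero_le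
      · exact theColor_seed G h tie
    · obtain ⟨hd, hcol⟩ := theColor_dist_one_white G h1 h2 tie
      rw [hd]
      exact ⟨by norm_num, hcol⟩
  set A := H.filter fun v => cfg v = some true ∨ (cfg v = none ∧ Bv G cfg v < Wv G cfg v)
    with hA
  set B := (Finset.univ \ H).filter fun v => cfg v = some true with hB
  have hAW : A ⊆ W1 := fun v hv => by
    rw [hA, Finset.mem_filter] at hv; exact hwhite v hv.2
  have hBW : B ⊆ W1 := fun v hv => by
    rw [hB, Finset.mem_filter] at hv; exact hwhite v (Or.inl hv.2)
  have hdisj : Disjoint A B := by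
    rw [Finset.disjoint_left]
    intro v hvA hvB
    rw [hA, Finset.mem_filter] at hvA
    rw [hB, Finset.mem_filter, Finset.mem_sdiff] at hvB
    exact hvB.1.2 hvA.1
  calc A.card + B.card = (A ∪ B).card := (Finset.card_union_of_disjoint hdisj).symm
    _ ≤ W1.card := Finset.card_le_card (Finset.union_subset hAW hBW)
    _ = whiteCount G (seedsOf cfg) (colOf cfg) tie 1 := by rw [hW1]; rfl

lemma card_good_ge (H : Finset V) (cfg : V → Option Bool) :
    H.card ≤ (H.filter fun v => cfg v = some true ∨
        (cfg v = none ∧ Bv G cfg v < Wv G cfg v)).card +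
      ((H.filter fun v => cfg v = some false).card +
        (H.filter fun v => cfg v = none ∧ Wv G cfg v ≤ Bv G cfg v).card) := by
  classical
  have hsplit := Finset.card_filter_add_card_filter_not (s := H)
    (p := fun v => cfg v = some true ∨ (cfg v = none ∧ Bv G cfg v < Wv G cfg v))
  have hsub : (H.filter fun v =>
      ¬ (cfg v = some true ∨ (cfg v = none ∧ Bv G cfg v < Wv G cfg v))) ⊆
      (H.filter fun v => cfg v = some false) ∪
        (H.filter fun v => cfg v = none ∧ Wv G cfg v ≤ Bv G cfg v) := by
    intro v hv
    rw [Finset.mem_filter] at hv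
    obtain ⟨hvH, hnp⟩ := hv
    rw [Finset.mem_union, Finset.mem_filter, Finset.mem_filter]
    rcases hcv : cfg v with _ | b
    · right
      refine ⟨hvH, rfl, ?_⟩
      by_contra hlt
      exact hnp (Or.inr ⟨hcv, not_le.mp hlt⟩)
    · cases b
      · left; exact ⟨hvH, rfl⟩
      · exact absurd (Or.inl hcv) hnp
  have hle := (Finset.card_le_card hsub).trans (Finset.card_union_le _ _)
  omega

lemma whiteCount_mono (R : Set V) (c0 tie : V → Bool) {t : ℕ} (ht : 1 ≤ t) :
    whiteCount G R c0 tie 1 ≤ whiteCount G R c0 tie t := by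
  unfold whiteCount
  refine Finset.card_le_card (fun v hv => ?_)
  rw [Finset.mem_filter] at hv ⊢
  refine ⟨hv.1, le_trans hv.2.1 ?_, hv.2.2⟩
  exact_mod_cast Nat.cast_le.mpr ht

lemma black_add_white_le (R : Set V) (c0 tie : V → Bool) (t : ℕ) :
    blackCount G R c0 tie t + whiteCount G R c0 tie t ≤ Fintype.card V := by
  classical
  unfold blackCount whiteCount
  rw [← Finset.card_union_of_disjoint]
  · exact (Finset.card_le_card (Finset.subset_univ _)).trans_eq (Finset.card_univ)
  · rw [Finset.disjoint_left]
    intro v hv1 hv2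
    rw [Finset.mem_filter] at hv1 hv2
    rw [hv1.2.2] at hv2
    exact absurd hv2.2.2 (by simp)

end Det
set_option maxHeartbeats 2000000 in
/-- if at least `n/2` nodes of an `n`-node graph have degree at least
`d₁* = (6/(αε²))·ln(12/(αεμ))`, then, for sufficiently large `n` and `μ ∈ [1/√n, 1)`, with
probability at least `1 − μ` more than `n/2` nodes are colored white by the end of round
one, and consequently an `(α,ε)`-weak attacker does not win in `t` rounds for any `t ≥ 1`. -/
theorem weak_attacker_fails_half_high_degree
    (α ε : ℝ) (hα0 : 0 < α) (hα : α < 1/2) (hε0 : 0 < ε) (hε : ε < 1/2) :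
    ∃ N : ℕ, ∀ n : ℕ, N ≤ n →
      ∀ μ : ℝ, 1 / Real.sqrt n ≤ μ → μ < 1 →
        ∀ (V : Type) [Fintype V] [DecidableEq V] (G : SimpleGraph V),
          Fintype.card V = n →
          (n : ℝ) / 2 ≤ ((Finset.univ.filter fun v : V =>
              (6 / (α * ε^2)) * Real.log (12 / (α * ε * μ)) ≤ (G.degree v : ℝ)).card : ℝ) →
          1 - μ ≤
            weakPr V α ε (fun cfg tie =>
              (n : ℝ) / 2 < (whiteCount G (seedsOf cfg) (colOf cfg) tie 1 : ℝ) ∧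
              ∀ t : ℕ, 1 ≤ t →
                blackCount G (seedsOf cfg) (colOf cfg) tie t <
                  whiteCount G (seedsOf cfg) (colOf cfg) tie t) := by
  have hαε : 0 < α * ε := mul_pos hα0 hε0
  refine ⟨⌈((192 / (α * ε))^2)^2⌉₊ + 1, ?_⟩
  intro n hn μ hμ1 hμ2 V _ _ G hcard hdeg
  set K : ℝ := (192 / (α * ε))^2 with hK
  have hKpos : 0 < K := by positivity
  have hnK : K^2 ≤ (n:ℝ) := by
    calc K^2 ≤ (⌈K^2⌉₊ : ℝ) := Nat.le_ceil _
      _ ≤ n := by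
          have : (⌈K^2⌉₊ : ℕ) ≤ n := le_trans (Nat.le_succ _) hn
          exact_mod_cast this
  have hn1 : 1 ≤ n := le_trans (Nat.le_add_left 1 _) hn
  have hnR : (1:ℝ) ≤ n := by exact_mod_cast hn1
  have hnpos : (0:ℝ) < n := by linarith
  have hsq_pos : 0 < Real.sqrt n := Real.sqrt_pos.mpr hnpos
  have hsqrt : K ≤ Real.sqrt n := by
    rw [show K = Real.sqrt (K^2) from (Real.sqrt_sq (le_of_lt hKpos)).symm]
    exact Real.sqrt_le_sqrt hnK
  have hμ0 : 0 < μ := lt_of_lt_of_le (by positivity) hμ1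
  have hμsqrt : 1 ≤ μ * Real.sqrt n := by
    rw [div_le_iff₀ hsq_pos] at hμ1
    linarith
  have hnμ : Real.sqrt n ≤ n * μ := by
    have hss : Real.sqrt n * Real.sqrt n = n := Real.mul_self_sqrt (le_of_lt hnpos)
    nlinarith [mul_le_mul_of_nonneg_left hμsqrt (le_of_lt hsq_pos)]
  have hKnμ : K ≤ n * μ := hsqrt.trans hnμ
  have hc : ∀ b, 0 ≤ coordW α ε b := by
    intro b
    rcases b with _ | b
    · show (0:ℝ) ≤ 1 - α; linarith
    · cases b
      · show (0:ℝ) ≤ (1/2 - ε) * α; nlinarith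
      · show (0:ℝ) ≤ (1/2 + ε) * α; nlinarith
  set L : ℝ := Real.log (12 / (α * ε * μ)) with hLdef
  have hαεμ : 0 < α * ε * μ := by positivity
  have hL0 : 0 ≤ L := by
    refine Real.log_nonneg ?_
    rw [le_div_iff₀ hαεμ]
    nlinarith
  set H : Finset V := Finset.univ.filter
    (fun v : V => (6 / (α * ε^2)) * L ≤ (G.degree v : ℝ)) with hHdef
  have hHn : (H.card : ℝ) ≤ n := by
    have h := Finset.card_le_univ H
    rw [hcard] at h
    exact_mod_cast h
  set g₁ : Option Bool → ℝ := gB ((1/2 - ε) * α) with hg₁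
  set g₂ : Option Bool → ℝ := gW ((1/2 + ε) * α) with hg₂
  set c₁ : ℝ := (α * ε / 8) * n with hc₁
  have hc₁pos : 0 < c₁ := by positivity
  have hm₁ : Mex α ε g₁ = 0 := Mex_gB α ε
  have hm₂ : Mex α ε g₂ = 0 := Mex_gW α ε
  have hb₁ : ∀ b, g₁ b ^ 2 ≤ 1 := gB_sq_le (by nlinarith) (by nlinarith)
  have hb₂ : ∀ b, g₂ b ^ 2 ≤ 1 := gW_sq_le (by nlinarith) (by nlinarith)
  -- the three bad events have probability at most μ/3 each
  have hKD : K * (α*ε)^2 = 192^2 := by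
    rw [hK]; field_simp
  have hcheb_aux : (n:ℝ) / c₁^2 ≤ μ/3 := by
    rw [div_le_div_iff₀ (by positivity) (by norm_num)]
    have h2 : K * (α*ε)^2 ≤ n * μ * (α*ε)^2 :=
      mul_le_mul_of_nonneg_right hKnμ (by positivity)
    rw [hKD] at h2
    have h3 := mul_le_mul_of_nonneg_right h2 (le_of_lt hnpos)
    rw [hc₁]
    ring_nf
    ring_nf at h3
    linarith [h3, hnpos]
  have hPr1 : weakPr₀ V α ε (fun cfg => c₁ ≤ ∑ v ∈ H, g₁ (cfg v)) ≤ μ/3 := by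
    refine (cheb α ε hc H g₁ hm₁ hb₁ hc₁pos).trans (le_trans ?_ hcheb_aux)
    gcongr
  have hPr2 : weakPr₀ V α ε (fun cfg => c₁ ≤ ∑ v ∈ Finset.univ \ H, g₂ (cfg v)) ≤ μ/3 := by
    refine (cheb α ε hc (Finset.univ \ H) g₂ hm₂ hb₂ hc₁pos).trans ?_
    refine le_trans ?_ hcheb_aux
    gcongr
    exact le_trans (Finset.card_le_univ _) (le_of_eq hcard)
  -- expectation bound for the number of bad nodes in `H`
  have hexp3 : Exp α ε (fun cfg =>
      ((H.filter fun v => cfg v = none ∧ Wv G cfg v ≤ Bv G cfg v).card : ℝ)) ≤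
        n * (α*ε*μ/12) := by
    have hrw : ∀ cfg : V → Option Bool,
        ((H.filter fun v => cfg v = none ∧ Wv G cfg v ≤ Bv G cfg v).card : ℝ) =
        ∑ v ∈ H, (if (cfg v = none ∧ Wv G cfg v ≤ Bv G cfg v) then (1:ℝ) else 0) := by
      intro cfg
      rw [Finset.card_filter]
      push_cast
      rfl
    rw [Exp_congr α ε hrw, Exp_sum]
    have hterm : ∀ v ∈ H, Exp α ε
        (fun cfg => if (cfg v = none ∧ Wv G cfg v ≤ Bv G cfg v) then (1:ℝ) else 0) ≤
          α*ε*μ/12 := by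
      intro v hv
      refine le_trans (le_of_eq
        (Exp_ite_eq_pr α ε (fun cfg => cfg v = none ∧ Wv G cfg v ≤ Bv G cfg v))) ?_
      refine (pr_bad_node G α ε hα0 hα hε0 hε hc v).trans ?_
      have hdegv : (6/(α*ε^2)) * L ≤ (G.degree v : ℝ) := by
        rw [hHdef] at hv
        exact (Finset.mem_filter.mp hv).2
      have hae2 : 0 < α*ε^2 := by positivity
      have h1 : (1 - α*ε^2) ^ G.degree v ≤ Real.exp (-(α*ε^2 * G.degree v)) :=
        one_sub_pow_le_exp (le_of_lt hae2) (by nlinarith) _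
      have h2 : Real.exp (-(α*ε^2 * G.degree v)) ≤ Real.exp (-L) := by
        rw [Real.exp_le_exp]
        have hmul := mul_le_mul_of_nonneg_left hdegv (le_of_lt hae2)
        have h6L : 6 * L ≤ α*ε^2 * (G.degree v : ℝ) := by
          have : α*ε^2 * ((6/(α*ε^2))*L) = 6 * L := by field_simp
          linarith [hmul, this.symm.le, this.le]
        linarith
      have h3 : Real.exp (-L) = α*ε*μ/12 := by
        rw [hLdef, Real.exp_neg, Real.exp_log (by positivity), inv_div]
      linarith
    refine le_trans (Finset.sum_le_sum hterm) ?_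
    rw [Finset.sum_const, nsmul_eq_mul]
    exact mul_le_mul_of_nonneg_right hHn (by positivity)
  have hPr3 : weakPr₀ V α ε (fun cfg => (α*ε/4) * n ≤
      ((H.filter fun v => cfg v = none ∧ Wv G cfg v ≤ Bv G cfg v).card : ℝ)) ≤ μ/3 := by
    refine (markov α ε hc _ (fun cfg => by positivity) (by positivity : (0:ℝ) < (α*ε/4)*n)).trans ?_
    calc Exp α ε (fun cfg =>
          ((H.filter fun v => cfg v = none ∧ Wv G cfg v ≤ Bv G cfg v).card : ℝ)) / ((α*ε/4)*n)
        ≤ (n * (α*ε*μ/12)) / ((α*ε/4)*n) := by gcongr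
      _ = μ/3 := by field_simp; ring
  -- probability that all three good events hold
  have hngood : 1 - μ ≤ weakPr₀ V α ε (fun cfg =>
      ¬ ((c₁ ≤ ∑ v ∈ H, g₁ (cfg v)) ∨ (c₁ ≤ ∑ v ∈ Finset.univ \ H, g₂ (cfg v)) ∨
        ((α*ε/4) * n ≤
          ((H.filter fun v => cfg v = none ∧ Wv G cfg v ≤ Bv G cfg v).card : ℝ)))) := by
    rw [weakPr₀_compl]
    have hu := weakPr₀_union3 α ε hc
      (fun cfg => c₁ ≤ ∑ v ∈ H, g₁ (cfg v))
      (fun cfg => c₁ ≤ ∑ v ∈ Finset.univ \ H, g₂ (cfg v))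
      (fun cfg => (α*ε/4) * n ≤
        ((H.filter fun v => cfg v = none ∧ Wv G cfg v ≤ Bv G cfg v).card : ℝ))
    linarith
  refine le_trans hngood (weakPr₀_le_weakPr α ε hc _ _ ?_)
  intro cfg tie hgood
  push_neg at hgood
  obtain ⟨h1, h2, h3⟩ := hgood
  -- real-valued abbreviations
  have hsum1 : ∑ v ∈ H, g₁ (cfg v) =
      ((H.filter fun v => cfg v = some false).card : ℝ) - H.card * ((1/2 - ε) * α) := by
    rw [hg₁]; exact sum_gB H ((1/2 - ε) * α) cfg
  have hsum2 : ∑ v ∈ Finset.univ \ H, g₂ (cfg v) =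
      (Finset.univ \ H).card * ((1/2 + ε) * α) -
        (((Finset.univ \ H).filter fun v => cfg v = some true).card : ℝ) := by
    rw [hg₂]; exact sum_gW (Finset.univ \ H) ((1/2 + ε) * α) cfg
  have hsdcard : ((Finset.univ \ H).card : ℝ) = n - H.card := by
    rw [Finset.card_sdiff_of_subset (Finset.subset_univ H),
      Nat.cast_sub (Finset.card_le_card (Finset.subset_univ H)), Finset.card_univ, hcard]
  -- deterministic count inequalities
  have hlow := whiteCount_lower G H cfg tie
  have hgge := card_good_ge G H cfg
  have hw1 : (n:ℝ)/2 < (whiteCount G (seedsOf cfg) (colOf cfg) tie 1 : ℝ) := by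
    have hlowR : ((H.filter fun v => cfg v = some true ∨
          (cfg v = none ∧ Bv G cfg v < Wv G cfg v)).card : ℝ) +
        (((Finset.univ \ H).filter fun v => cfg v = some true).card : ℝ) ≤
        (whiteCount G (seedsOf cfg) (colOf cfg) tie 1 : ℝ) := by
      exact_mod_cast hlow
    have hggeR : (H.card : ℝ) ≤ ((H.filter fun v => cfg v = some true ∨
          (cfg v = none ∧ Bv G cfg v < Wv G cfg v)).card : ℝ) +
        (((H.filter fun v => cfg v = some false).card : ℝ) +
          ((H.filter fun v => cfg v = none ∧ Wv G cfg v ≤ Bv G cfg v).card : ℝ)) := by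
      exact_mod_cast hgge
    rw [hsum1] at h1
    rw [hsum2, hsdcard] at h2
    have hHhalf : (n:ℝ)/2 ≤ H.card := by
      rw [hHdef]
      exact hdeg
    rw [hc₁] at h1 h2
    have e1 : (n/2) * (1 - α) ≤ (H.card : ℝ) * (1 - α) :=
      mul_le_mul_of_nonneg_right hHhalf (by linarith)
    have e2 : 0 < α * ε * n := by positivity
    linarith [hlowR, hggeR, h1, h2, h3, e1, e2]
  refine ⟨hw1, ?_⟩
  intro t ht
  have hmono := whiteCount_mono G (seedsOf cfg) (colOf cfg) tie ht
  have hbw := black_add_white_le G (seedsOf cfg) (colOf cfg) tie t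
  rw [hcard] at hbw
  have hfin : (blackCount G (seedsOf cfg) (colOf cfg) tie t : ℝ) <
      (whiteCount G (seedsOf cfg) (colOf cfg) tie t : ℝ) := by
    have hm : (whiteCount G (seedsOf cfg) (colOf cfg) tie 1 : ℝ) ≤
        (whiteCount G (seedsOf cfg) (colOf cfg) tie t : ℝ) := Nat.cast_le.mpr hmono
    have hb : (blackCount G (seedsOf cfg) (colOf cfg) tie t : ℝ) +
        (whiteCount G (seedsOf cfg) (colOf cfg) tie t : ℝ) ≤ n := by
      exact_mod_cast hbw
    linarith
  exact_mod_cast hfin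
end

section
/- Fix an integer d ≥ 2 and α ∈ (0,1), and let T be a complete d-ary tree on n nodes. If each node is, independently, a seed node with probability α, then for all sufficiently large n, with probability at least 1 − 1/n every node v of T satisfies d(v,R₀) ≤ 2·t₅*, where t₅* := log_d((2/α)·ln n) + 1; hence all nodes are colored within O(log_d log n^{1/α}) rounds asymptotically almost surely. -/
open Finset
open scoped Classical

/-- The probability weight of an outcome `c : V → Bool` when each coordinate is,
independently, `true` with probability `p` (and `false` with probability `1 - p`). -/
noncomputable def bernWeight {V : Type*} [Fintype V] (p : ℝ) (c : V → Bool) : ℝ :=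
  ∏ v, if c v then p else 1 - p

/-- The probability of the event `E` when each coordinate is, independently, `true`
with probability `p`. -/
noncomputable def bernPr (V : Type*) [Fintype V] [DecidableEq V] (p : ℝ)
    (E : (V → Bool) → Prop) : ℝ :=
  ∑ c : V → Bool, if E c then bernWeight p c else 0
/-- `G` is a complete `d`-ary tree: its nodes can be identified with the lists over `Fin d`
of length at most `h` for some depth `h` (the root being the empty list), a node being
adjacent exactly to its parent (its tail) and to its `d` children. -/
def IsCompleteDAryTree {V : Type*} (G : SimpleGraph V) (d : ℕ) : Prop :=
  ∃ (h : ℕ) (f : V ≃ {l : List (Fin d) // l.length ≤ h}),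
    ∀ u v : V, G.Adj u v ↔
      (((f u : List (Fin d))) = (f v : List (Fin d)).tail ∧ (f v : List (Fin d)) ≠ []) ∨
      (((f v : List (Fin d))) = (f u : List (Fin d)).tail ∧ (f u : List (Fin d)) ≠ [])


set_option linter.unusedSectionVars false
set_option linter.unusedVariables false
set_option maxHeartbeats 1000000
section prob
variable {V : Type*} [Fintype V] [DecidableEq V] {p : ℝ}

lemma bernWeight_nonneg (h0 : 0 ≤ p) (h1 : p ≤ 1) (c : V → Bool) : 0 ≤ bernWeight p c :=
  Finset.prod_nonneg fun v _ => by by_cases hc : c v <;> simp [hc] <;> linarith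

lemma bern_factor' (g : V → Bool → ℝ) :
    ∑ c : V → Bool, ∏ v, g v (c v) = ∏ v, (g v true + g v false) := by
  have := Fintype.prod_sum (κ := fun _ : V => Bool) (fun v b => g v b)
  simp only [Fintype.sum_bool] at this
  rw [this]

lemma bern_total : ∑ c : V → Bool, bernWeight p c = 1 := by
  unfold bernWeight
  rw [bern_factor' (fun v b => if b then p else 1 - p)]
  simp

lemma bernPr_nonneg (h0 : 0 ≤ p) (h1 : p ≤ 1) (E : (V → Bool) → Prop) : 0 ≤ bernPr V p E :=
  Finset.sum_nonneg fun c _ => by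
    by_cases h : E c
    · simpa [h] using bernWeight_nonneg h0 h1 c
    · simp [h]

lemma bernPr_mono (h0 : 0 ≤ p) (h1 : p ≤ 1) {E F : (V → Bool) → Prop}
    (h : ∀ c, E c → F c) : bernPr V p E ≤ bernPr V p F := by
  apply Finset.sum_le_sum
  intro c _
  by_cases hE : E c
  · simp [hE, h c hE]
  · by_cases hF : F c
    · simpa [hE, hF] using bernWeight_nonneg h0 h1 c
    · simp [hE, hF]

lemma bernPr_not (E : (V → Bool) → Prop) :
    bernPr V p (fun c => ¬ E c) = 1 - bernPr V p E := by
  have h : bernPr V p (fun c => ¬ E c) + bernPr V p E = 1 := by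
    unfold bernPr
    rw [← Finset.sum_add_distrib, ← bern_total (p := p) (V := V)]
    apply Finset.sum_congr rfl
    intro c _
    by_cases hE : E c <;> simp [hE]
  linarith

lemma bernPr_union (h0 : 0 ≤ p) (h1 : p ≤ 1) {ι : Type*} [Fintype ι]
    (A : ι → (V → Bool) → Prop) :
    bernPr V p (fun c => ∃ i, A i c) ≤ ∑ i : ι, bernPr V p (A i) := by
  unfold bernPr
  rw [Finset.sum_comm]
  apply Finset.sum_le_sum
  intro c _
  by_cases h : ∃ i, A i c
  · rw [if_pos h]
    obtain ⟨i, hi⟩ := h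
    have h2 := Finset.single_le_sum (f := fun i => if A i c then bernWeight p c else 0)
      (fun j _ => by by_cases hj : A j c <;> simp [hj, bernWeight_nonneg h0 h1 c]) (mem_univ i)
    simpa [hi] using h2
  · rw [if_neg h]
    exact Finset.sum_nonneg fun j _ => by
      by_cases hj : A j c <;> simp [hj, bernWeight_nonneg h0 h1 c]

lemma bernPr_all_false (h0 : 0 ≤ p) (h1 : p ≤ 1) (S : Finset V) :
    bernPr V p (fun c => ∀ u ∈ S, c u = false) = (1 - p) ^ S.card := by
  simp only [bernPr, bernWeight]
  have key : ∀ c : V → Bool,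
      (if (∀ u ∈ S, c u = false) then ∏ v, (if c v then p else 1 - p) else 0)
      = ∏ v, (fun v b => if v ∈ S then (if b then 0 else 1 - p)
          else (if b then p else 1 - p)) v (c v) := by
    intro c
    by_cases h : ∀ u ∈ S, c u = false
    · rw [if_pos h]
      apply Finset.prod_congr rfl
      intro v _
      by_cases hv : v ∈ S
      · simp [hv, h v hv]
      · simp [hv]
    · rw [if_neg h]
      push_neg at h
      obtain ⟨u, hu, huc⟩ := h
      simp only [Bool.not_eq_false] at huc
      symm
      exact Finset.prod_eq_zero (Finset.mem_univ u) (by simp [hu, huc])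
  refine (Finset.sum_congr rfl (g := fun c => ∏ v, (fun v b => if v ∈ S then (if b then (0:ℝ) else 1 - p)
      else (if b then p else 1 - p)) v (c v)) fun c _ => by convert key c).trans ?_
  rw [bern_factor' (fun v b => if v ∈ S then (if b then (0:ℝ) else 1 - p)
      else (if b then p else 1 - p))]
  have h3 : (∏ v, ((fun v b => if v ∈ S then (if b then (0:ℝ) else 1 - p)
          else (if b then p else 1 - p)) v true
        + (fun v b => if v ∈ S then (if b then (0:ℝ) else 1 - p)
          else (if b then p else 1 - p)) v false))
      = ∏ v, (if v ∈ S then 1 - p else 1) :=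
    Finset.prod_congr rfl fun v _ => by by_cases hv : v ∈ S <;> simp [hv]
  rw [h3, Finset.prod_ite_mem, Finset.univ_inter, Finset.prod_const]

end prob

section tree
variable {V : Type*} {G : SimpleGraph V} {d h : ℕ}
  (f : V ≃ {l : List (Fin d) // l.length ≤ h})
  (hadj : ∀ u v : V, G.Adj u v ↔
      (((f u : List (Fin d))) = (f v : List (Fin d)).tail ∧ (f v : List (Fin d)) ≠ []) ∨
      (((f v : List (Fin d))) = (f u : List (Fin d)).tail ∧ (f u : List (Fin d)) ≠ []))

include hadj in
lemma edist_node_ancestor :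
    ∀ (s l : List (Fin d)) (hl : (s ++ l).length ≤ h) (hl2 : l.length ≤ h),
      G.edist (f.symm ⟨s ++ l, hl⟩) (f.symm ⟨l, hl2⟩) ≤ (s.length : ℕ∞) := by
  intro s
  induction s with
  | nil =>
    intro l hl hl2
    simp [SimpleGraph.edist_self]
  | cons x s ih =>
    intro l hl hl2
    have hl' : (s ++ l).length ≤ h := by simp at hl ⊢; omega
    have hadj1 : G.Adj (f.symm ⟨x :: (s ++ l), by simpa using hl⟩) (f.symm ⟨s ++ l, hl'⟩) := by
      rw [hadj]
      right
      simp
    have tri := SimpleGraph.edist_triangle (G := G)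
      (u := f.symm ⟨x :: (s ++ l), by simpa using hl⟩)
      (v := f.symm ⟨s ++ l, hl'⟩) (w := f.symm ⟨l, hl2⟩)
    have h1 : G.edist (f.symm ⟨x :: (s ++ l), by simpa using hl⟩) (f.symm ⟨s ++ l, hl'⟩) = 1 :=
      SimpleGraph.edist_eq_one_iff_adj.mpr hadj1
    have h2 := ih l hl' hl2
    calc G.edist (f.symm ⟨x :: s ++ l, hl⟩) (f.symm ⟨l, hl2⟩)
        ≤ G.edist (f.symm ⟨x :: (s ++ l), by simpa using hl⟩) (f.symm ⟨s ++ l, hl'⟩)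
          + G.edist (f.symm ⟨s ++ l, hl'⟩) (f.symm ⟨l, hl2⟩) := tri
      _ ≤ 1 + (s.length : ℕ∞) := by rw [h1]; exact add_le_add_right h2 1
      _ = ((x :: s).length : ℕ∞) := by
          simp only [List.length_cons]
          push_cast
          rw [add_comm]

include hadj in
lemma ball_lemma [Fintype V] (hd : 2 ≤ d) (t : ℕ) (ht : t ≤ h) (v : V) :
    ∃ S : Finset V, S.card = d ^ t ∧ ∀ u ∈ S, G.edist u v ≤ (2 * t : ℕ) := by
  classical
  set l : List (Fin d) := (f v : List (Fin d)) with hl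
  have hlh : l.length ≤ h := (f v).2
  set k := l.length - (h - t) with hk
  set a := l.drop k with ha
  have hka : a.length = l.length - k := by simp [ha]
  have halen : a.length ≤ h - t := by omega
  have hkt : k ≤ t := by omega
  -- node of a
  have hha : a.length ≤ h := by omega
  -- v is take k l ++ a
  have hva : (l.take k) ++ a = l := List.take_append_drop k l
  have hvnode : v = f.symm ⟨(l.take k) ++ a, by rw [hva]; exact hlh⟩ := by
    apply f.injective
    simp only [Equiv.apply_symm_apply]
    exact Subtype.ext hva.symm
  have hdist_va : G.edist v (f.symm ⟨a, hha⟩) ≤ (t : ℕ∞) := by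
    rw [hvnode]
    refine le_trans (edist_node_ancestor f hadj (l.take k) a _ hha) ?_
    have : (l.take k).length = k := by
      rw [List.length_take]; omega
    rw [this]
    exact_mod_cast Nat.cast_le.mpr hkt
  -- the set S
  let ι : List.Vector (Fin d) t → V := fun s =>
    f.symm ⟨s.toList ++ a, by
      rw [List.length_append, s.toList_length]; omega⟩
  have hι_inj : Function.Injective ι := by
    intro s₁ s₂ hss
    have h1 : s₁.toList ++ a = s₂.toList ++ a :=
      congrArg Subtype.val (f.symm.injective hss)
    exact List.Vector.toList_injective (List.append_cancel_right h1)
  refine ⟨Finset.univ.image ι, ?_, ?_⟩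
  · rw [Finset.card_image_of_injective _ hι_inj]
    simp [card_vector]
  · intro u hu
    simp only [Finset.mem_image, Finset.mem_univ, true_and] at hu
    obtain ⟨s, rfl⟩ := hu
    have h1 : G.edist (ι s) (f.symm ⟨a, hha⟩) ≤ (t : ℕ∞) := by
      refine le_trans (edist_node_ancestor f hadj s.toList a _ hha) ?_
      rw [s.toList_length]
    calc G.edist (ι s) v ≤ G.edist (ι s) (f.symm ⟨a, hha⟩) + G.edist (f.symm ⟨a, hha⟩) v :=
          SimpleGraph.edist_triangle
      _ ≤ (t : ℕ∞) + (t : ℕ∞) := by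
          refine add_le_add h1 ?_
          rw [SimpleGraph.edist_comm]
          exact hdist_va
      _ = ((2 * t : ℕ) : ℕ∞) := by push_cast; ring

end tree


lemma geom_le' {d : ℕ} (hd : 2 ≤ d) : ∀ k, ∑ i ∈ Finset.range k, d ^ i ≤ d ^ k := by
  intro k
  induction k with
  | zero => simp
  | succ k ih =>
    rw [Finset.sum_range_succ, pow_succ]
    have : d ^ k * 2 ≤ d ^ k * d := Nat.mul_le_mul_left _ hd
    omega

lemma analytic (d : ℕ) (hd : 2 ≤ d) (α : ℝ) (hα0 : 0 < α) (hα1 : α < 1) :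
    ∃ N : ℕ, ∀ n : ℕ, N ≤ n →
      1 ≤ (2/α) * Real.log n ∧ ((2/α) * Real.log n + 1) * d ≤ n ∧ 1 ≤ n := by
  set B : ℝ := 2 / α with hB
  have hBpos : 0 < B := by positivity
  have hB2 : 2 ≤ B := by
    rw [hB, le_div_iff₀ hα0]; linarith
  set C : ℝ := d * (2 * B + 1) with hC
  have hCpos : 0 < C := by positivity
  refine ⟨⌈C ^ 2⌉₊ + 2, fun n hn => ?_⟩
  have hn2 : (2:ℕ) ≤ n := by omega
  have hnR : (2:ℝ) ≤ n := by exact_mod_cast hn2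
  have hn0 : (0:ℝ) < n := by linarith
  have hlog2 : (1/2 : ℝ) ≤ Real.log n := by
    have h1 : Real.log 2 ≤ Real.log n := Real.log_le_log (by norm_num) hnR
    have := Real.log_two_gt_d9
    linarith
  have hsq : Real.sqrt n * Real.sqrt n = n := Real.mul_self_sqrt hn0.le
  have hsq1 : 1 ≤ Real.sqrt n := by
    have := Real.sqrt_le_sqrt (show (1:ℝ) ≤ n by linarith)
    simpa using this
  have hCs : C ≤ Real.sqrt n := by
    have h1 : C ^ 2 ≤ (n:ℝ) := by
      have := Nat.le_ceil (C ^ 2)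
      have h2 : (⌈C ^ 2⌉₊ : ℝ) ≤ n := by exact_mod_cast le_trans (by omega) hn
      linarith
    have := Real.sqrt_le_sqrt h1
    rwa [Real.sqrt_sq hCpos.le] at this
  have hlogsqrt : Real.log n ≤ 2 * Real.sqrt n := by
    have h1 : Real.log (Real.sqrt n) ≤ Real.sqrt n - 1 :=
      Real.log_le_sub_one_of_pos (by positivity)
    rw [Real.log_sqrt hn0.le] at h1
    linarith
  refine ⟨?_, ?_, by omega⟩
  · calc (1:ℝ) = 2 * (1/2) := by norm_num
      _ ≤ B * Real.log n := by
        apply mul_le_mul hB2 hlog2 (by norm_num) (by linarith)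
  · have hdR : (d:ℝ) ≤ C := by
      rw [hC]; nlinarith
    calc (B * Real.log n + 1) * d ≤ (B * (2 * Real.sqrt n) + Real.sqrt n) * d := by
          apply mul_le_mul_of_nonneg_right _ (by positivity)
          have : B * Real.log n ≤ B * (2 * Real.sqrt n) :=
            mul_le_mul_of_nonneg_left hlogsqrt hBpos.le
          linarith
      _ = C * Real.sqrt n := by rw [hC]; ring
      _ ≤ Real.sqrt n * Real.sqrt n :=
          mul_le_mul_of_nonneg_right hCs (by positivity)
      _ = n := hsq

/-- in a complete `d`-ary tree on `n` nodes (`d ≥ 2`) with each node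
independently a seed with probability `α`, for all sufficiently large `n`, with probability
at least `1 − 1/n` every node is within distance `2·t₅*` of the seed set, where
`t₅* = log_d((2/α)·ln n) + 1`; hence all nodes are colored within `O(log_d log n^{1/α})`
rounds a.a.s. -/
theorem dary_tree_stabilization_upper_bound
    (d : ℕ) (hd : 2 ≤ d) (α : ℝ) (hα0 : 0 < α) (hα1 : α < 1) :
    ∃ N : ℕ, ∀ (V : Type) [Fintype V] [DecidableEq V] (G : SimpleGraph V) (n : ℕ),
      Fintype.card V = n → N ≤ n → IsCompleteDAryTree G d →
        1 - 1 / (n : ℝ) ≤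
          bernPr V α (fun seed =>
            ∀ v : V, distSet G {u | seed u = true} v ≠ ⊤ ∧
              (((distSet G {u | seed u = true} v).toNat : ℝ)) ≤
                2 * (Real.logb d ((2 / α) * Real.log n) + 1)) := by
  obtain ⟨N, hN⟩ := analytic d hd α hα0 hα1
  refine ⟨N, ?_⟩
  intro V _ _ G n hcard hn htree
  obtain ⟨h, f, hadj⟩ := htree
  obtain ⟨hX1, hXn, hn1⟩ := hN n hn
  set X : ℝ := (2 / α) * Real.log n with hXdef
  have hd1 : 1 < d := hd
  have hdR : (1:ℝ) < d := by exact_mod_cast hd1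
  have hd0R : (0:ℝ) < d := by linarith
  set m : ℕ := ⌈X⌉₊ with hmdef
  set t : ℕ := Nat.clog d m with htdef
  have hn0R : (0:ℝ) < n := by exact_mod_cast hn1
  -- upper bound on the number of nodes
  have hcard_le : n ≤ d ^ (h + 1) := by
    rw [← hcard]
    have hinj : Function.Injective (fun v : V =>
        (⟨⟨(f v : List (Fin d)).length, Nat.lt_succ_of_le (f v).2⟩,
          ⟨(f v : List (Fin d)), rfl⟩⟩ : Σ i : Fin (h+1), List.Vector (Fin d) i)) := by
      intro u v huv
      apply f.injective
      apply Subtype.ext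
      exact congrArg (fun p : (Σ i : Fin (h+1), List.Vector (Fin d) i) => p.2.toList) huv
    refine le_trans (Fintype.card_le_of_injective _ hinj) ?_
    rw [Fintype.card_sigma]
    simp only [card_vector, Fintype.card_fin]
    rw [Fin.sum_univ_eq_sum_range]
    exact geom_le' hd (h+1)
  have hmX : X ≤ m := Nat.le_ceil X
  have hmX1 : (m:ℝ) < X + 1 := Nat.ceil_lt_add_one (by linarith)
  have hmdh : m ≤ d ^ h := by
    have h5 : (n:ℝ) ≤ (d:ℝ)^(h+1) := by exact_mod_cast hcard_le
    have h4 : (m:ℝ) * d < ((d:ℝ)^h) * d := by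
      calc (m:ℝ) * d < (X+1) * d := by
            exact mul_lt_mul_of_pos_right hmX1 hd0R
        _ ≤ n := hXn
        _ ≤ (d:ℝ)^(h+1) := h5
        _ = (d:ℝ)^h * d := by ring
    have h7 : (m:ℝ) < (d:ℝ)^h := lt_of_mul_lt_mul_right h4 hd0R.le
    have h8 : m < d ^ h := by exact_mod_cast h7
    exact h8.le
  have hth : t ≤ h := (Nat.clog_le_iff_le_pow hd1).mpr hmdh
  have hdtm : m ≤ d ^ t := Nat.le_pow_clog hd1 m
  -- real bound on t
  have htlogb : (t:ℝ) ≤ Real.logb d X + 1 := by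
    rcases Nat.eq_zero_or_pos t with ht0 | htpos
    · rw [ht0]
      have : 0 ≤ Real.logb d X := Real.logb_nonneg hdR hX1
      push_cast
      linarith
    · have hm1 : 1 < m := by
        by_contra hle
        push_neg at hle
        have : t = 0 := by rw [htdef]; exact Nat.clog_of_right_le_one hle d
        omega
      have hpred : d ^ (t - 1) < m := Nat.pow_pred_clog_lt_self hd1 hm1
      have h1 : ((d:ℝ)) ^ (t-1) < X := by
        have h2 : (d ^ (t-1) : ℕ) + 1 ≤ m := hpred
        have h3 : ((d ^ (t-1) : ℕ) : ℝ) + 1 ≤ (m:ℝ) := by exact_mod_cast h2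
        push_cast at h3
        linarith
      have h4 : ((t:ℝ) - 1) ≤ Real.logb d X := by
        have h5 : Real.logb d ((d:ℝ)^(t-1)) ≤ Real.logb d X :=
          Real.logb_le_logb_of_le hdR (by positivity) h1.le
        rw [Real.logb_pow, Real.logb_self_eq_one hdR, mul_one] at h5
        have h6 : (((t-1 : ℕ)):ℝ) = (t:ℝ) - 1 := by
          rw [Nat.cast_sub htpos]
          norm_num
        rwa [h6] at h5
      linarith
  -- choose the witness sets
  choose S hScard hSdist using fun v : V => ball_lemma f hadj hd t hth v
  -- the implication between events
  have himp : ∀ c : V → Bool, (¬ ∃ v : V, ∀ u ∈ S v, c u = false) →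
      (∀ v : V, distSet G {u | c u = true} v ≠ ⊤ ∧
        (((distSet G {u | c u = true} v).toNat : ℝ)) ≤ 2 * (Real.logb d X + 1)) := by
    intro c hc v
    push_neg at hc
    obtain ⟨u, hu, hcu⟩ := hc v
    rw [Bool.ne_false_iff] at hcu
    have hmem : u ∈ {w : V | c w = true} := hcu
    have hdist : distSet G {w : V | c w = true} v ≤ ((2*t : ℕ) : ℕ∞) := by
      refine le_trans ?_ (hSdist v u hu)
      exact iInf₂_le u hmem
    have htop : ((2*t : ℕ) : ℕ∞) ≠ ⊤ := ENat.coe_ne_top _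
    refine ⟨ne_top_of_le_ne_top htop hdist, ?_⟩
    have h1 : (distSet G {w : V | c w = true} v).toNat ≤ 2*t := by
      have h2 := ENat.toNat_le_toNat hdist htop
      simpa using h2
    calc (((distSet G {w : V | c w = true} v).toNat : ℕ):ℝ) ≤ ((2*t:ℕ):ℝ) := by
          exact_mod_cast h1
      _ ≤ 2 * (Real.logb d X + 1) := by push_cast; linarith
  have hmono := bernPr_mono (V := V) hα0.le hα1.le himp
  have hnot := bernPr_not (V := V) (p := α) (fun c => ∃ v : V, ∀ u ∈ S v, c u = false)
  have hunion := bernPr_union (V := V) hα0.le hα1.le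
    (fun (v : V) (c : V → Bool) => ∀ u ∈ S v, c u = false)
  have hsum : ∑ v : V, bernPr V α (fun c => ∀ u ∈ S v, c u = false)
      = (n:ℝ) * (1-α)^(d^t) := by
    have hAv : ∀ v : V, bernPr V α (fun c => ∀ u ∈ S v, c u = false) = (1-α)^(d^t) := by
      intro v
      rw [bernPr_all_false hα0.le hα1.le, hScard v]
    rw [Finset.sum_congr rfl (fun v _ => hAv v), Finset.sum_const, Finset.card_univ,
      hcard, nsmul_eq_mul]
  have hBadle : bernPr V α (fun c => ∃ v : V, ∀ u ∈ S v, c u = false)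
      ≤ (n:ℝ) * (1-α)^(d^t) := le_trans hunion (le_of_eq hsum)
  -- final numeric estimate
  have hfinal : (n:ℝ) * (1-α)^(d^t) ≤ 1 / n := by
    have e1 : (1-α : ℝ) ≤ Real.exp (-α) := by linarith [Real.add_one_le_exp (-α)]
    have e2 : (1-α:ℝ)^(d^t) ≤ Real.exp (-α) ^ (d^t) := pow_le_pow_left₀ (by linarith) e1 _
    have e3 : Real.exp (-α) ^ (d^t) = Real.exp (((d^t : ℕ):ℝ) * (-α)) := by
      rw [Real.exp_nat_mul]
    have e4 : ((d^t : ℕ):ℝ) * (-α) ≤ -(2 * Real.log n) := by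
      have h5 : X ≤ ((d^t : ℕ):ℝ) := le_trans hmX (by exact_mod_cast hdtm)
      have h6 : α * X = 2 * Real.log n := by
        rw [hXdef]
        field_simp
      nlinarith
    have e5 : Real.exp (((d^t:ℕ):ℝ) * (-α)) ≤ Real.exp (-(2*Real.log n)) :=
      Real.exp_le_exp.mpr e4
    have e6 : Real.exp (-(2*Real.log n)) = ((n:ℝ)⁻¹)^2 := by
      rw [show -(2*Real.log (n:ℝ)) = ((2:ℕ):ℝ) * (-Real.log n) by push_cast; ring,
        Real.exp_nat_mul, Real.exp_neg, Real.exp_log hn0R]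
    have e7 : (1-α:ℝ)^(d^t) ≤ ((n:ℝ)⁻¹)^2 := by
      calc (1-α:ℝ)^(d^t) ≤ Real.exp (-α) ^ (d^t) := e2
        _ = Real.exp (((d^t : ℕ):ℝ) * (-α)) := e3
        _ ≤ Real.exp (-(2*Real.log n)) := e5
        _ = ((n:ℝ)⁻¹)^2 := e6
    calc (n:ℝ) * (1-α)^(d^t) ≤ (n:ℝ) * ((n:ℝ)⁻¹)^2 :=
          mul_le_mul_of_nonneg_left e7 hn0R.le
      _ = 1 / n := by
          field_simp
  calc 1 - 1/(n:ℝ) ≤ 1 - (n:ℝ)*(1-α)^(d^t) := by linarith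
    _ ≤ 1 - bernPr V α (fun c => ∃ v : V, ∀ u ∈ S v, c u = false) := by linarith
    _ = bernPr V α (fun c => ¬ ∃ v : V, ∀ u ∈ S v, c u = false) := hnot.symm
    _ ≤ _ := hmono
end
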